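/- arXiv:2502.06264 — 7 statements merged into one kernel-verified Lean document; each statement's English description precedes it below -/
import Mathlib

section
/- Let K be a field, n, m ≥ 0, and let x_0, …, x_{n+m} ∈ K be pairwise distinct. Then in K[x] ⊗_K K[x] ⊗_K K[x] one has ∑_{k=0}^{n+m} (∑_{i=0}^n x_k^i a_i) ⊗ (∑_{j=0}^m x_k^j b_j) ⊗ c^{(k)} = T_{n,m}, i.e. the Toom–Cook representation represents the polynomial multiplication tensor for degrees n and m. -/
/-!
Writing `C (x_k ^ i) * X ^ i` as `x_k ^ i • X ^ i` and expanding trilinearly, the coefficient of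
`X ^ i ⊗ X ^ j` in the Toom–Cook sum is `∑_k x_k ^ (i + j) • c⁽ᵏ⁾`. This is the Lagrange
interpolant of `X ^ (i + j)` at the `n + m + 1` distinct nodes, hence equals `X ^ (i + j)` itself
since `i + j ≤ n + m`.
-/

open Polynomial TensorProduct Finset

theorem Lagrange.sum_pow_smul_basis {K ι : Type*} [Field K] [DecidableEq ι] {s : Finset ι}
    {v : ι → K} (hvs : Set.InjOn v s) {d : ℕ} (hd : d < #s) :
    ∑ k ∈ s, v k ^ d • Lagrange.basis s v k = X ^ d := by
  have hdeg : (X ^ d : K[X]).degree < #s := by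
    rw [degree_X_pow]
    exact_mod_cast hd
  simpa [Lagrange.interpolate_apply, smul_eq_C_mul] using
    (Lagrange.eq_interpolate hvs hdeg).symm

theorem TensorProduct.sum_smul_tmul_sum_smul_tmul {R M N P ι κ : Type*} [CommSemiring R]
    [AddCommMonoid M] [AddCommMonoid N] [AddCommMonoid P] [Module R M] [Module R N] [Module R P]
    (s : Finset ι) (t : Finset κ) (f : ι → R) (g : κ → R) (a : ι → M) (b : κ → N) (c : P) :
    (∑ i ∈ s, f i • a i) ⊗ₜ[R] ((∑ j ∈ t, g j • b j) ⊗ₜ[R] c)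
      = ∑ i ∈ s, ∑ j ∈ t, a i ⊗ₜ[R] (b j ⊗ₜ[R] ((f i * g j) • c)) := by
  simp only [sum_tmul, tmul_sum, smul_tmul, ← tmul_smul, mul_smul]
  exact sum_comm

/-- Let `K` be a field, `n, m ≥ 0`, and let `x 0, …, x (n+m) ∈ K` be pairwise
distinct.  Then in `K[x] ⊗ K[x] ⊗ K[x]` the Toom–Cook representation
`∑_{k=0}^{n+m} (∑_{i=0}^n x_k^i a_i) ⊗ (∑_{j=0}^m x_k^j b_j) ⊗ c⁽ᵏ⁾` equals the polynomial
multiplication tensor `T_{n,m} = ∑_{i=0}^n ∑_{j=0}^m a_i ⊗ b_j ⊗ c_{i+j}`, where `c⁽ᵏ⁾` is the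
`k`-th Lagrange basis polynomial with respect to the nodes `x 0, …, x (n+m)`. -/
theorem toomCook_eq_mulTensor (K : Type) [Field K] (n m : ℕ) (x : ℕ → K)
    (hx : ∀ k ∈ Finset.range (n + m + 1), ∀ l ∈ Finset.range (n + m + 1),
      k ≠ l → x k ≠ x l) :
    ∑ k ∈ Finset.range (n + m + 1),
        (∑ i ∈ Finset.range (n + 1), C (x k ^ i) * X ^ i) ⊗ₜ[K]
          ((∑ j ∈ Finset.range (m + 1), C (x k ^ j) * X ^ j) ⊗ₜ[K]
            Lagrange.basis (Finset.range (n + m + 1)) x k)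
      = ∑ i ∈ Finset.range (n + 1), ∑ j ∈ Finset.range (m + 1),
          ((X : Polynomial K) ^ i) ⊗ₜ[K]
            (((X : Polynomial K) ^ j) ⊗ₜ[K] ((X : Polynomial K) ^ (i + j))) := by
  have hinj : Set.InjOn x (range (n + m + 1)) := fun k hk l hl hkl =>
    by_contra fun hne => hx k hk l hl hne hkl
  simp_rw [← smul_eq_C_mul, sum_smul_tmul_sum_smul_tmul, ← pow_add]
  rw [sum_comm]
  refine sum_congr rfl fun i hi => ?_
  rw [sum_comm]
  refine sum_congr rfl fun j hj => ?_
  rw [← tmul_sum, ← tmul_sum, Lagrange.sum_pow_smul_basis hinj]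
  rw [mem_range] at hi hj
  rw [card_range]
  omega
end

section
/- Let K be a field containing at least n+m+1 distinct elements. Then there exist polynomials u_ℓ ∈ K[x] of degree ≤ n, v_ℓ ∈ K[x] of degree ≤ m, and w_ℓ ∈ K[x] of degree ≤ n+m, for ℓ = 1, …, n+m+1, such that T_{n,m} = ∑_{ℓ=1}^{n+m+1} u_ℓ ⊗ v_ℓ ⊗ w_ℓ. In particular, the rank of the polynomial multiplication tensor for degrees n and m is at most n+m+1. -/
/-!
Evaluation at `n + m + 1` distinct points `e l`: the Lagrange basis `w l` expresses every
monomial of degree `≤ n + m` as `X ^ k = ∑ l, (e l) ^ k • w l`. Taking `u l` and `v l` to be the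
truncated geometric series `∑ i ≤ n, (e l) ^ i • X ^ i` and `∑ j ≤ m, (e l) ^ j • X ^ j`, the
coefficient of `X ^ i ⊗ X ^ j` in `∑ l, u l ⊗ v l ⊗ w l` is `∑ l, (e l) ^ (i + j) • w l = X ^ (i + j)`.
-/

open Polynomial TensorProduct

theorem smul_tmul_smul_tmul {R M N P : Type*} [CommSemiring R] [AddCommMonoid M]
    [AddCommMonoid N] [AddCommMonoid P] [Module R M] [Module R N] [Module R P]
    (a b : R) (x : M) (y : N) (z : P) :
    (a • x) ⊗ₜ[R] ((b • y) ⊗ₜ[R] z) = x ⊗ₜ[R] (y ⊗ₜ[R] ((a * b) • z)) := by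
  rw [smul_tmul, smul_tmul, ← tmul_smul, smul_smul]

theorem degree_sum_range_smul_X_pow_le {R : Type*} [Semiring R] (c : ℕ → R) (d : ℕ) :
    (∑ i ∈ Finset.range (d + 1), c i • (X : R[X]) ^ i).degree ≤ d := by
  rw [← mem_degreeLE]
  refine Submodule.sum_mem _ fun i hi => Submodule.smul_mem _ _ ?_
  rw [mem_degreeLE]
  exact (degree_X_pow_le i).trans (by exact_mod_cast Finset.mem_range_succ_iff.mp hi)

theorem X_pow_eq_sum_smul_lagrange_basis {K ι : Type*} [Field K] [Fintype ι] [DecidableEq ι]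
    {e : ι → K} (he : Function.Injective e) {k : ℕ} (hk : k < Fintype.card ι) :
    (X : K[X]) ^ k = ∑ l, e l ^ k • Lagrange.basis Finset.univ e l := by
  have hdeg : ((X : K[X]) ^ k).degree < (Finset.univ : Finset ι).card := by
    rw [Finset.card_univ, degree_X_pow]
    exact_mod_cast hk
  conv_lhs => rw [Lagrange.eq_interpolate he.injOn hdeg]
  simp [Lagrange.interpolate_apply, smul_eq_C_mul]

theorem sum_tmul_tmul_eq_sum_X_pow_tmul_tmul {K ι : Type*} [Field K] [Fintype ι]
    (e : ι → K) (w : ι → K[X]) (n m : ℕ)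
    (hw : ∀ k ≤ n + m, (X : K[X]) ^ k = ∑ l, e l ^ k • w l) :
    ∑ l, (∑ i ∈ Finset.range (n + 1), e l ^ i • (X : K[X]) ^ i) ⊗ₜ[K]
        ((∑ j ∈ Finset.range (m + 1), e l ^ j • (X : K[X]) ^ j) ⊗ₜ[K] w l)
      = ∑ i ∈ Finset.range (n + 1), ∑ j ∈ Finset.range (m + 1),
          ((X : K[X]) ^ i) ⊗ₜ[K] (((X : K[X]) ^ j) ⊗ₜ[K] ((X : K[X]) ^ (i + j))) := by
  calc _ = ∑ l, ∑ i ∈ Finset.range (n + 1), ∑ j ∈ Finset.range (m + 1),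
          ((X : K[X]) ^ i) ⊗ₜ[K] (((X : K[X]) ^ j) ⊗ₜ[K] (e l ^ (i + j) • w l)) := by
        simp only [sum_tmul, tmul_sum, smul_tmul_smul_tmul, pow_add]
        exact Finset.sum_congr rfl fun l _ => Finset.sum_comm
    _ = ∑ i ∈ Finset.range (n + 1), ∑ j ∈ Finset.range (m + 1),
          ((X : K[X]) ^ i) ⊗ₜ[K] (((X : K[X]) ^ j) ⊗ₜ[K] ∑ l, e l ^ (i + j) • w l) := by
        simp only [tmul_sum]
        rw [Finset.sum_comm]
        exact Finset.sum_congr rfl fun i _ => Finset.sum_comm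
    _ = _ := by
        refine Finset.sum_congr rfl fun i hi => Finset.sum_congr rfl fun j hj => ?_
        rw [Finset.mem_range] at hi hj
        rw [← hw (i + j) (by omega)]

/-- Let `K` be a field containing at least `n+m+1` distinct elements.  Then
there exist polynomials `u ℓ` of degree `≤ n`, `v ℓ` of degree `≤ m`, and `w ℓ` of degree
`≤ n+m`, for `ℓ = 1, …, n+m+1`, such that `T_{n,m} = ∑_ℓ u_ℓ ⊗ v_ℓ ⊗ w_ℓ`.  In particular, the
rank of the polynomial multiplication tensor for degrees `n` and `m` is at most `n+m+1`. -/
theorem mulTensor_rank_le (K : Type) [Field K] (n m : ℕ)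
    (hK : ∃ s : Finset K, s.card = n + m + 1) :
    ∃ u v w : Fin (n + m + 1) → Polynomial K,
      (∀ l, (u l).degree ≤ (n : ℕ)) ∧
      (∀ l, (v l).degree ≤ (m : ℕ)) ∧
      (∀ l, (w l).degree ≤ ((n + m : ℕ))) ∧
      ∑ l, (u l) ⊗ₜ[K] ((v l) ⊗ₜ[K] (w l))
        = ∑ i ∈ Finset.range (n + 1), ∑ j ∈ Finset.range (m + 1),
            ((X : Polynomial K) ^ i) ⊗ₜ[K]
              (((X : Polynomial K) ^ j) ⊗ₜ[K] ((X : Polynomial K) ^ (i + j))) := by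
  obtain ⟨s, hs⟩ := hK
  let e : Fin (n + m + 1) → K := fun l => (s.equivFinOfCardEq hs).symm l
  have he : Function.Injective e := Subtype.val_injective.comp (Equiv.injective _)
  refine ⟨fun l => ∑ i ∈ Finset.range (n + 1), e l ^ i • X ^ i,
    fun l => ∑ j ∈ Finset.range (m + 1), e l ^ j • X ^ j,
    fun l => Lagrange.basis Finset.univ e l,
    fun l => degree_sum_range_smul_X_pow_le _ n, fun l => degree_sum_range_smul_X_pow_le _ m,
    fun l => ?_, sum_tmul_tmul_eq_sum_X_pow_tmul_tmul e _ n m fun k hk => ?_⟩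
  · rw [Lagrange.degree_basis he.injOn (Finset.mem_univ l), Finset.card_univ, Fintype.card_fin]
    rfl
  · exact X_pow_eq_sum_smul_lagrange_basis he (by rw [Fintype.card_fin]; omega)
end

section
/- Let K be a field, let x, y ∈ K with x ≠ y, and let c_y, T_0, T_1, …, T_n ∈ K[x] be arbitrary polynomials. It takes no more than 2n+1 flips to get from the representation consisting of the triple (∑_{i=0}^n x^i a_i, ∑_{j=0}^m x^j b_j, c_y + T_0), the triples ((y^i − x^i) a_i, ∑_{j=0}^m x^j b_j, c_y + T_i) for i = 1, …, n, and the triple (∑_{i=0}^n y^i a_i, ∑_{i=1}^m (y^i − x^i) b_i, c_y), to the representation consisting of the triple (∑_{i=0}^n x^i a_i, ∑_{j=0}^m x^j b_j, T_0), the triples ((y^i − x^i) a_i, ∑_{j=0}^m x^j b_j, T_i) for i = 1, …, n, and the triple (∑_{i=0}^n y^i a_i, ∑_{j=0}^m y^j b_j, c_y). -/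
/-!
Write `Pₓ = ∑ xⁱ aᵢ`, `Qₓ = ∑ xʲ bⱼ`, similarly `P_y`, `Q_y`, and `dᵢ = (yⁱ − xⁱ) aᵢ`, so that
`Pₓ + ∑ dᵢ = P_y` and `Qₓ + ∑_{i ≥ 1} (yⁱ − xⁱ) bᵢ = Q_y`. Flipping the first triple against
each `(dᵢ, Qₓ, c_y + Tᵢ)` along the shared `Qₓ` (`n` flips) turns it into `(P_y, Qₓ, c_y + T₀)`
and the others into `(dᵢ, Qₓ, Tᵢ − T₀)`. It now shares `P_y` with the last triple, and one flip
turns that pair into `(P_y, Q_y, c_y)`, `(P_y, Qₓ, T₀)`. Flipping `(P_y, Qₓ, T₀)` back against the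
`(dᵢ, Qₓ, Tᵢ − T₀)` (`n` flips) restores `Pₓ` and the `Tᵢ`.
-/

open Polynomial TensorProduct

namespace FlipGraph

variable (K : Type) [Field K]

/-- A triple `(u, v, w)` of polynomials, standing for the rank-one tensor `u ⊗ v ⊗ w`. -/
abbrev Triple := Polynomial K × Polynomial K × Polynomial K

/-- The rank-one tensor `u ⊗ v ⊗ w` represented by a triple. -/
noncomputable def tensorOf (t : Triple K) :
    TensorProduct K (Polynomial K) (TensorProduct K (Polynomial K) (Polynomial K)) :=
  t.1 ⊗ₜ[K] (t.2.1 ⊗ₜ[K] t.2.2)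

/-- The tensor represented by a representation (a multiset of triples). -/
noncomputable def tensorOfRep (S : Multiset (Triple K)) :
    TensorProduct K (Polynomial K) (TensorProduct K (Polynomial K) (Polynomial K)) :=
  (S.map (tensorOf K)).sum

/-- Two representations are equivalent up to rescaling: each triple is replaced by another
triple representing the same rank-one tensor (nonzero scalar factors being moved between the
three components). Such rescalings are not counted as steps. -/
def ReEq (S S' : Multiset (Triple K)) : Prop :=
  S.map (tensorOf K) = S'.map (tensorOf K)

/-- A flip replaces two triples that agree in one position by two new triples: for a shared
first component and any `l ∈ K`, `(u, v₁, w₁), (u, v₂, w₂) ↦ (u, v₁ − l·v₂, w₁),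
(u, v₂, w₂ + l·w₁)`, and analogously when the shared component is the second or the third. -/
def IsFlip (S S' : Multiset (Triple K)) : Prop :=
  ∃ (T : Multiset (Triple K)) (l : K),
    (∃ u v₁ w₁ v₂ w₂, S = (u, v₁, w₁) ::ₘ (u, v₂, w₂) ::ₘ T ∧
        S' = (u, v₁ - l • v₂, w₁) ::ₘ (u, v₂, w₂ + l • w₁) ::ₘ T) ∨
    (∃ v u₁ w₁ u₂ w₂, S = (u₁, v, w₁) ::ₘ (u₂, v, w₂) ::ₘ T ∧
        S' = (u₁ - l • u₂, v, w₁) ::ₘ (u₂, v, w₂ + l • w₁) ::ₘ T) ∨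
    (∃ w u₁ v₁ u₂ v₂, S = (u₁, v₁, w) ::ₘ (u₂, v₂, w) ::ₘ T ∧
        S' = (u₁ - l • u₂, v₁, w) ::ₘ (u₂, v₂ + l • v₁, w) ::ₘ T)

/-- A reduction replaces two triples that agree in two positions by their sum in the remaining
position, e.g. `(u₁, v, w), (u₂, v, w) ↦ (u₁ + u₂, v, w)`. -/
def IsReduction (S S' : Multiset (Triple K)) : Prop :=
  ∃ T : Multiset (Triple K),
    (∃ u₁ u₂ v w, S = (u₁, v, w) ::ₘ (u₂, v, w) ::ₘ T ∧ S' = (u₁ + u₂, v, w) ::ₘ T) ∨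
    (∃ u v₁ v₂ w, S = (u, v₁, w) ::ₘ (u, v₂, w) ::ₘ T ∧ S' = (u, v₁ + v₂, w) ::ₘ T) ∨
    (∃ u v w₁ w₂, S = (u, v, w₁) ::ₘ (u, v, w₂) ::ₘ T ∧ S' = (u, v, w₁ + w₂) ::ₘ T)

/-- `Path K S S' f r` means that in the flip graph there is a path from representation `S` to
representation `S'` consisting of `f` flips and `r` reductions (interleaved with arbitrarily
many uncounted rescalings). -/
inductive Path : Multiset (Triple K) → Multiset (Triple K) → ℕ → ℕ → Prop
  | refl (S : Multiset (Triple K)) : Path S S 0 0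
  | rescale {S S' T : Multiset (Triple K)} {f r : ℕ} :
      ReEq K S S' → Path S' T f r → Path S T f r
  | flip {S S' T : Multiset (Triple K)} {f r : ℕ} :
      IsFlip K S S' → Path S' T f r → Path S T (f + 1) r
  | reduce {S S' T : Multiset (Triple K)} {f r : ℕ} :
      IsReduction K S S' → Path S' T f r → Path S T f (r + 1)

/-- The standard representation of the polynomial multiplication tensor `T_{n,m}`:
the multiset of triples `(a_i, b_j, c_{i+j})` for `0 ≤ i ≤ n`, `0 ≤ j ≤ m`. -/
noncomputable def stdRep (n m : ℕ) : Multiset (Triple K) :=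
  (Finset.range (n + 1) ×ˢ Finset.range (m + 1)).val.map
    fun p => ((X : Polynomial K) ^ p.1, (X : Polynomial K) ^ p.2,
              (X : Polynomial K) ^ (p.1 + p.2))

end FlipGraph

open FlipGraph

theorem sum_range_succ_eq_add_sum_Icc {M : Type*} [AddCommMonoid M] (f : ℕ → M) (n : ℕ) :
    ∑ i ∈ Finset.range (n + 1), f i = f 0 + ∑ i ∈ Finset.Icc 1 n, f i := by
  rw [Nat.range_succ_eq_Icc_zero, ← Finset.insert_Icc_add_one_left_eq_Icc n.zero_le,
    Finset.sum_insert (by simp), zero_add]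

theorem sum_C_pow_mul_X_pow_add_sum_Icc_C_sub_pow {R : Type*} [Ring R] (a b : R) (n : ℕ) :
    ∑ i ∈ Finset.range (n + 1), C (a ^ i) * X ^ i
      + ∑ i ∈ Finset.Icc 1 n, C (b ^ i - a ^ i) * X ^ i
      = ∑ i ∈ Finset.range (n + 1), C (b ^ i) * X ^ i := by
  simp only [sum_range_succ_eq_add_sum_Icc, map_sub, sub_mul, Finset.sum_sub_distrib, pow_zero]
  abel

namespace FlipGraph

variable {K : Type} [Field K]

theorem Path.trans {S T U : Multiset (Triple K)} {f r f' r' : ℕ}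
    (h₁ : Path K S T f r) (h₂ : Path K T U f' r') : Path K S U (f + f') (r + r') := by
  induction h₁ with
  | refl => simpa using h₂
  | rescale h _ ih => exact .rescale h (ih h₂)
  | flip h _ ih => rw [Nat.add_right_comm]; exact .flip h (ih h₂)
  | reduce h _ ih => rw [Nat.add_right_comm]; exact .reduce h (ih h₂)

theorem IsFlip.path {S S' : Multiset (Triple K)} (h : IsFlip K S S') : Path K S S' 1 0 :=
  .flip h (.refl S')

theorem isFlip_of_fst_eq (l : K) (u v₁ w₁ v₂ w₂ : K[X]) (R : Multiset (Triple K)) :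
    IsFlip K ((u, v₁, w₁) ::ₘ (u, v₂, w₂) ::ₘ R)
      ((u, v₁ - l • v₂, w₁) ::ₘ (u, v₂, w₂ + l • w₁) ::ₘ R) :=
  ⟨R, l, .inl ⟨u, v₁, w₁, v₂, w₂, rfl, rfl⟩⟩

theorem isFlip_of_snd_eq (l : K) (v u₁ w₁ u₂ w₂ : K[X]) (R : Multiset (Triple K)) :
    IsFlip K ((u₁, v, w₁) ::ₘ (u₂, v, w₂) ::ₘ R)
      ((u₁ - l • u₂, v, w₁) ::ₘ (u₂, v, w₂ + l • w₁) ::ₘ R) :=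
  ⟨R, l, .inr (.inl ⟨v, u₁, w₁, u₂, w₂, rfl, rfl⟩)⟩

theorem Path.flip_snd_family {ι : Type*} (l : K) (P Q W : K[X]) (u w : ι → K[X])
    (s : Multiset ι) (R : Multiset (Triple K)) :
    Path K ((P, Q, W) ::ₘ (R + s.map (fun i => (u i, Q, w i))))
      ((P - l • (s.map u).sum, Q, W) ::ₘ (R + s.map (fun i => (u i, Q, w i + l • W))))
      (Multiset.card s) 0 := by
  induction s using Multiset.induction generalizing P R with
  | empty => simpa using Path.refl _
  | cons a s ih =>
    have rest := ih (P - l • u a) ((u a, Q, w a + l • W) ::ₘ R)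
    rw [Multiset.cons_add, Multiset.cons_add, sub_sub, ← smul_add] at rest
    simp only [Multiset.map_cons, Multiset.sum_cons, Multiset.card_cons, Multiset.add_cons]
    simpa only [Nat.add_comm 1, Nat.add_zero] using
      (IsFlip.path (isFlip_of_snd_eq l Q P W (u a) (w a) _)).trans rest

theorem Path.flip_snd_family_of_eq {ι : Type*} (l : K) {P P' Q W : K[X]} {u w w' : ι → K[X]}
    {s : Multiset ι} (b : Triple K) (hP : P - l • (s.map u).sum = P')
    (hw : ∀ i ∈ s, w i + l • W = w' i) :
    Path K ((P, Q, W) ::ₘ b ::ₘ s.map (fun i => (u i, Q, w i)))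
      ((P', Q, W) ::ₘ b ::ₘ s.map (fun i => (u i, Q, w' i))) (Multiset.card s) 0 := by
  have hmap : s.map (fun i => (u i, Q, w' i)) = s.map (fun i => (u i, Q, w i + l • W)) :=
    Multiset.map_congr rfl fun i hi => by rw [hw i hi]
  rw [hmap, ← hP, ← Multiset.singleton_add, ← Multiset.singleton_add]
  exact flip_snd_family l P Q W u w s {b}

end FlipGraph

theorem lemmaC_general (K : Type) [Field K] (n m : ℕ) (x y : K)
    (cy : Polynomial K) (T : ℕ → Polynomial K) :
    ∃ f ≤ 2 * n + 1,
      Path K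
        ((∑ i ∈ Finset.range (n + 1), C (x ^ i) * X ^ i,
          ∑ j ∈ Finset.range (m + 1), C (x ^ j) * X ^ j,
          cy + T 0) ::ₘ
         (∑ i ∈ Finset.range (n + 1), C (y ^ i) * X ^ i,
          ∑ i ∈ Finset.Icc 1 m, C (y ^ i - x ^ i) * X ^ i,
          cy) ::ₘ
         ((Finset.Icc 1 n).val.map fun i =>
           (C (y ^ i - x ^ i) * X ^ i,
            ∑ j ∈ Finset.range (m + 1), C (x ^ j) * X ^ j,
            cy + T i)))
        ((∑ i ∈ Finset.range (n + 1), C (x ^ i) * X ^ i,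
          ∑ j ∈ Finset.range (m + 1), C (x ^ j) * X ^ j,
          T 0) ::ₘ
         (∑ i ∈ Finset.range (n + 1), C (y ^ i) * X ^ i,
          ∑ j ∈ Finset.range (m + 1), C (y ^ j) * X ^ j,
          cy) ::ₘ
         ((Finset.Icc 1 n).val.map fun i =>
           (C (y ^ i - x ^ i) * X ^ i,
            ∑ j ∈ Finset.range (m + 1), C (x ^ j) * X ^ j,
            T i)))
        f 0 := by
  set Px := ∑ i ∈ Finset.range (n + 1), C (x ^ i) * X ^ i
  set Py := ∑ i ∈ Finset.range (n + 1), C (y ^ i) * X ^ i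
  set Qx := ∑ j ∈ Finset.range (m + 1), C (x ^ j) * X ^ j
  set Qy := ∑ j ∈ Finset.range (m + 1), C (y ^ j) * X ^ j
  set Qd := ∑ i ∈ Finset.Icc 1 m, C (y ^ i - x ^ i) * X ^ i
  set A : ℕ → K[X] := fun i => C (y ^ i - x ^ i) * X ^ i
  set s := (Finset.Icc 1 n).val
  have hPy : Px + (s.map A).sum = Py := sum_C_pow_mul_X_pow_add_sum_Icc_C_sub_pow x y n
  have hQy : Qx + Qd = Qy := sum_C_pow_mul_X_pow_add_sum_Icc_C_sub_pow x y m
  have hs : Multiset.card s = n := by simp [s]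
  have phase₁ : Path K
      ((Px, Qx, cy + T 0) ::ₘ (Py, Qd, cy) ::ₘ s.map (fun i => (A i, Qx, cy + T i)))
      ((Py, Qx, cy + T 0) ::ₘ (Py, Qd, cy) ::ₘ s.map (fun i => (A i, Qx, T i - T 0)))
      (Multiset.card s) 0 :=
    Path.flip_snd_family_of_eq (-1) _ (by rw [← hPy, neg_one_smul, sub_neg_eq_add])
      fun i _ => by rw [neg_one_smul, ← sub_eq_add_neg, add_sub_add_left_eq_sub]
  have middle : Path K
      ((Py, Qx, cy + T 0) ::ₘ (Py, Qd, cy) ::ₘ s.map (fun i => (A i, Qx, T i - T 0)))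
      ((Py, Qx, T 0) ::ₘ (Py, Qy, cy) ::ₘ s.map (fun i => (A i, Qx, T i - T 0))) 1 0 := by
    rw [Multiset.cons_swap, Multiset.cons_swap (Py, Qx, T 0)]
    convert IsFlip.path (isFlip_of_fst_eq (-1) Py Qd cy Qx (cy + T 0) _) using 4
    · rw [← hQy, neg_one_smul, sub_neg_eq_add, add_comm]
    · rw [neg_one_smul, add_neg_cancel_comm]
  have phase₂ : Path K
      ((Py, Qx, T 0) ::ₘ (Py, Qy, cy) ::ₘ s.map (fun i => (A i, Qx, T i - T 0)))
      ((Px, Qx, T 0) ::ₘ (Py, Qy, cy) ::ₘ s.map (fun i => (A i, Qx, T i))) (Multiset.card s) 0 :=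
    Path.flip_snd_family_of_eq 1 _ (by rw [← hPy, one_smul, add_sub_cancel_right])
      fun i _ => by rw [one_smul, sub_add_cancel]
  exact ⟨_, by omega, phase₁.trans (middle.trans phase₂)⟩

/-- Lemma C of the paper.  Let `K` be a field, `x ≠ y` in `K`, and let
`cy, T 0, T 1, …, T n ∈ K[x]` be arbitrary polynomials.  It takes no more than `2n+1` flips to
get from the representation consisting of the triple
`(∑_{i=0}^n x^i a_i, ∑_{j=0}^m x^j b_j, cy + T 0)`, the triples
`((y^i − x^i) a_i, ∑_{j=0}^m x^j b_j, cy + T i)` for `i = 1, …, n`, and the triple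
`(∑_{i=0}^n y^i a_i, ∑_{i=1}^m (y^i − x^i) b_i, cy)`, to the representation consisting of the
triple `(∑_{i=0}^n x^i a_i, ∑_{j=0}^m x^j b_j, T 0)`, the triples
`((y^i − x^i) a_i, ∑_{j=0}^m x^j b_j, T i)` for `i = 1, …, n`, and the triple
`(∑_{i=0}^n y^i a_i, ∑_{j=0}^m y^j b_j, cy)`. -/
theorem lemmaC (K : Type) [Field K] (n m : ℕ) (x y : K) (hxy : x ≠ y)
    (cy : Polynomial K) (T : ℕ → Polynomial K) :
    ∃ f ≤ 2 * n + 1,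
      Path K
        ((∑ i ∈ Finset.range (n + 1), C (x ^ i) * X ^ i,
          ∑ j ∈ Finset.range (m + 1), C (x ^ j) * X ^ j,
          cy + T 0) ::ₘ
         (∑ i ∈ Finset.range (n + 1), C (y ^ i) * X ^ i,
          ∑ i ∈ Finset.Icc 1 m, C (y ^ i - x ^ i) * X ^ i,
          cy) ::ₘ
         ((Finset.Icc 1 n).val.map fun i =>
           (C (y ^ i - x ^ i) * X ^ i,
            ∑ j ∈ Finset.range (m + 1), C (x ^ j) * X ^ j,
            cy + T i)))
        ((∑ i ∈ Finset.range (n + 1), C (x ^ i) * X ^ i,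
          ∑ j ∈ Finset.range (m + 1), C (x ^ j) * X ^ j,
          T 0) ::ₘ
         (∑ i ∈ Finset.range (n + 1), C (y ^ i) * X ^ i,
          ∑ j ∈ Finset.range (m + 1), C (y ^ j) * X ^ j,
          cy) ::ₘ
         ((Finset.Icc 1 n).val.map fun i =>
           (C (y ^ i - x ^ i) * X ^ i,
            ∑ j ∈ Finset.range (m + 1), C (x ^ j) * X ^ j,
            T i)))
        f 0 :=
  lemmaC_general K n m x y cy T
end

section
/- Let K be an arbitrary field and n ≥ 1. In the flip graph of the polynomial multiplication tensor T_{n,1} there is a path (consisting of flips and reductions) that leads from the standard representation {(a_i, b_j, c_{i+j}) : 0 ≤ i ≤ n, 0 ≤ j ≤ 1} to a representation of length ⌈(3/2)(n+1)⌉. -/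
/-!
Karatsuba's trick turns the four triples `(a_i, b_j, c_{i+j})`, `j ∈ {0, 1}`, `i ∈ {k, k + 1}` of
the standard representation into the three triples `(a_k + a_{k+1}, b_0 + b_1, c_{k+1})`,
`(a_k, b_0, c_k - c_{k+1})`, `(a_{k+1}, b_1, c_{k+2} - c_{k+1})`, using three flips and one
reduction. Pairing up the columns `i` of `T_{n,1}` (all but one of them when `n` is even) and
applying this to each pair leaves `⌈3(n + 1)/2⌉` triples.
-/

open Polynomial TensorProduct

open FlipGraph

namespace FlipGraph

variable {K : Type} [Field K]

theorem IsFlip.add_right {S S' : Multiset (Triple K)} (h : IsFlip K S S')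
    (T : Multiset (Triple K)) : IsFlip K (S + T) (S' + T) := by
  obtain ⟨T₀, l, h⟩ := h
  refine ⟨T₀ + T, l, ?_⟩
  rcases h with ⟨u, v₁, w₁, v₂, w₂, rfl, rfl⟩ | ⟨v, u₁, w₁, u₂, w₂, rfl, rfl⟩ |
    ⟨w, u₁, v₁, u₂, v₂, rfl, rfl⟩
  · exact .inl ⟨u, v₁, w₁, v₂, w₂, by simp, by simp⟩
  · exact .inr <| .inl ⟨v, u₁, w₁, u₂, w₂, by simp, by simp⟩
  · exact .inr <| .inr ⟨w, u₁, v₁, u₂, v₂, by simp, by simp⟩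

theorem IsReduction.add_right {S S' : Multiset (Triple K)} (h : IsReduction K S S')
    (T : Multiset (Triple K)) : IsReduction K (S + T) (S' + T) := by
  obtain ⟨T₀, h⟩ := h
  refine ⟨T₀ + T, ?_⟩
  rcases h with ⟨u₁, u₂, v, w, rfl, rfl⟩ | ⟨u, v₁, v₂, w, rfl, rfl⟩ | ⟨u, v, w₁, w₂, rfl, rfl⟩
  · exact .inl ⟨u₁, u₂, v, w, by simp, by simp⟩
  · exact .inr <| .inl ⟨u, v₁, v₂, w, by simp, by simp⟩
  · exact .inr <| .inr ⟨u, v, w₁, w₂, by simp, by simp⟩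

theorem ReEq.add_right {S S' : Multiset (Triple K)} (h : ReEq K S S')
    (T : Multiset (Triple K)) : ReEq K (S + T) (S' + T) := by
  rw [ReEq, Multiset.map_add, Multiset.map_add, h]

theorem Path.add_right {S S' : Multiset (Triple K)} {f r : ℕ} (h : Path K S S' f r)
    (T : Multiset (Triple K)) : Path K (S + T) (S' + T) f r := by
  induction h with
  | refl S => exact .refl _
  | rescale h _ ih => exact .rescale (h.add_right T) ih
  | flip h _ ih => exact .flip (h.add_right T) ih
  | reduce h _ ih => exact .reduce (h.add_right T) ih

theorem Path.add_left {S S' : Multiset (Triple K)} {f r : ℕ} (h : Path K S S' f r)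
    (T : Multiset (Triple K)) : Path K (T + S) (T + S') f r := by
  simpa only [add_comm T] using h.add_right T

theorem Path.flip_fst (u v₁ w₁ v₂ w₂ : K[X]) (l : K) (T : Multiset (Triple K)) :
    Path K ((u, v₁, w₁) ::ₘ (u, v₂, w₂) ::ₘ T)
      ((u, v₁ - l • v₂, w₁) ::ₘ (u, v₂, w₂ + l • w₁) ::ₘ T) 1 0 :=
  .flip ⟨T, l, .inl ⟨u, v₁, w₁, v₂, w₂, rfl, rfl⟩⟩ (.refl _)

theorem Path.flip_snd (v u₁ w₁ u₂ w₂ : K[X]) (l : K) (T : Multiset (Triple K)) :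
    Path K ((u₁, v, w₁) ::ₘ (u₂, v, w₂) ::ₘ T)
      ((u₁ - l • u₂, v, w₁) ::ₘ (u₂, v, w₂ + l • w₁) ::ₘ T) 1 0 :=
  .flip ⟨T, l, .inr <| .inl ⟨v, u₁, w₁, u₂, w₂, rfl, rfl⟩⟩ (.refl _)

theorem Path.flip_thd (w u₁ v₁ u₂ v₂ : K[X]) (l : K) (T : Multiset (Triple K)) :
    Path K ((u₁, v₁, w) ::ₘ (u₂, v₂, w) ::ₘ T)
      ((u₁ - l • u₂, v₁, w) ::ₘ (u₂, v₂ + l • v₁, w) ::ₘ T) 1 0 :=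
  .flip ⟨T, l, .inr <| .inr ⟨w, u₁, v₁, u₂, v₂, rfl, rfl⟩⟩ (.refl _)

theorem Path.reduce_fst (u₁ u₂ v w : K[X]) (T : Multiset (Triple K)) :
    Path K ((u₁, v, w) ::ₘ (u₂, v, w) ::ₘ T) ((u₁ + u₂, v, w) ::ₘ T) 0 1 :=
  .reduce ⟨T, .inl ⟨u₁, u₂, v, w, rfl, rfl⟩⟩ (.refl _)

theorem Path.karatsuba (a₀ a₁ b₀ b₁ c₀ c₁ c₂ : K[X]) :
    Path K {(a₀, b₀, c₀), (a₀, b₁, c₁), (a₁, b₀, c₁), (a₁, b₁, c₂)}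
      {(a₀ + a₁, b₀ + b₁, c₁), (a₀, b₀, c₀ - c₁), (a₁, b₁, c₂ - c₁)} 3 1 := by
  have h₁ := Path.flip_thd c₁ a₀ b₁ a₁ b₀ 1 {(a₀, b₀, c₀), (a₁, b₁, c₂)}
  have h₂ := Path.flip_snd b₁ (a₀ - a₁) c₁ a₁ c₂ (-1) {(a₁, b₀ + b₁, c₁), (a₀, b₀, c₀)}
  have h₃ := Path.flip_fst a₀ b₁ c₁ b₀ c₀ (-1) {(a₁, b₁, c₂ - c₁), (a₁, b₀ + b₁, c₁)}
  have h₄ := Path.reduce_fst a₀ a₁ (b₀ + b₁) c₁ {(a₀, b₀, c₀ - c₁), (a₁, b₁, c₂ - c₁)}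
  simp only [one_smul, neg_smul, sub_neg_eq_add, sub_add_cancel, ← sub_eq_add_neg,
    add_comm b₁ b₀] at h₁ h₂ h₃ h₄
  -- `cons_swap` is a permutation lemma, so `simp` sorts every representation the same way
  simp only [Multiset.insert_eq_cons, ← Multiset.cons_zero, Multiset.cons_swap] at h₁ h₂ h₃ h₄ ⊢
  exact h₁.trans (h₂.trans (h₃.trans h₄))

variable (K)

noncomputable def stdColumn (i m : ℕ) : Multiset (Triple K) :=
  (Finset.range (m + 1)).val.map fun j => ((X : K[X]) ^ i, (X : K[X]) ^ j, (X : K[X]) ^ (i + j))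

theorem card_stdRep (n m : ℕ) : Multiset.card (stdRep K n m) = (n + 1) * (m + 1) := by
  rw [stdRep, Multiset.card_map, Finset.card_val, Finset.card_product, Finset.card_range,
    Finset.card_range]

theorem stdRep_zero (m : ℕ) : stdRep K 0 m = stdColumn K 0 m := by
  simp [stdRep, stdColumn, Finset.range_one]

theorem stdRep_succ (n m : ℕ) : stdRep K (n + 1) m = stdRep K n m + stdColumn K (n + 1) m := by
  simp only [stdRep, stdColumn, Finset.product_val, Finset.range_val, Multiset.range_succ (n + 1),
    Multiset.cons_product, Multiset.map_add, Multiset.map_map]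
  rw [add_comm]
  rfl

theorem stdColumn_one (i : ℕ) :
    stdColumn K i 1 = {((X : K[X]) ^ i, 1, X ^ i), (X ^ i, X, X ^ (i + 1))} := by
  simp only [stdColumn, Finset.range_val, Multiset.range_succ, Multiset.range_zero,
    Multiset.cons_zero, Multiset.map_cons, Multiset.map_singleton, pow_zero, pow_one, add_zero,
    Multiset.insert_eq_cons]
  exact Multiset.pair_comm _ _

theorem Path.karatsuba_stdColumn (i : ℕ) :
    Path K (stdColumn K i 1 + stdColumn K (i + 1) 1)
      {(X ^ i + X ^ (i + 1), 1 + X, X ^ (i + 1)), (X ^ i, 1, X ^ i - X ^ (i + 1)),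
        (X ^ (i + 1), X, X ^ (i + 2) - X ^ (i + 1))} 3 1 := by
  have h := Path.karatsuba ((X : K[X]) ^ i) (X ^ (i + 1)) 1 X (X ^ i) (X ^ (i + 1)) (X ^ (i + 2))
  rw [stdColumn_one, stdColumn_one, Multiset.insert_eq_cons, Multiset.cons_add,
    Multiset.singleton_add]
  exact h

end FlipGraph

theorem path_to_short_rep_deg_one_general (K : Type) [Field K] (n : ℕ) :
    ∃ (R : Multiset (Triple K)) (f r : ℕ),
      Path K (stdRep K n 1) R f r ∧ Multiset.card R = (3 * (n + 1) + 1) / 2 := by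
  induction n using Nat.twoStepInduction with
  | zero => exact ⟨_, 0, 0, .refl _, by simp [card_stdRep]⟩
  | one =>
    have h := Path.karatsuba_stdColumn K 0
    rw [← stdRep_zero, ← stdRep_succ] at h
    exact ⟨_, 3, 1, h, rfl⟩
  | more n ih _ =>
    obtain ⟨R, f, r, hR, hcard⟩ := ih
    have h := (hR.add_right _).trans ((Path.karatsuba_stdColumn K (n + 1)).add_left R)
    rw [← add_assoc, ← stdRep_succ, ← stdRep_succ] at h
    exact ⟨_, _, _, h, by
      simp only [Multiset.card_add, hcard, Multiset.insert_eq_cons, Multiset.card_cons,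
        Multiset.card_singleton]
      omega⟩

/-- Let `K` be an arbitrary field and `n ≥ 1`.  In the flip graph of the
polynomial multiplication tensor `T_{n,1}` there is a path (consisting of flips and
reductions) from the standard representation to a representation of length `⌈(3/2)(n+1)⌉`. -/
theorem path_to_short_rep_deg_one (K : Type) [Field K] (n : ℕ) (hn : 1 ≤ n) :
    ∃ (R : Multiset (Triple K)) (f r : ℕ),
      Path K (stdRep K n 1) R f r ∧ Multiset.card R = (3 * (n + 1) + 1) / 2 :=
  path_to_short_rep_deg_one_general K n
end

section
/- Let K be an arbitrary field and n ≥ 1. Then the rank of the polynomial multiplication tensor T_{n,1} over K is at most ⌈(3/2)(n+1)⌉, i.e. there exist u_ℓ ∈ K[x] of degree ≤ n, v_ℓ ∈ K[x] of degree ≤ 1, w_ℓ ∈ K[x] of degree ≤ n+1, ℓ = 1, …, ⌈(3/2)(n+1)⌉, with T_{n,1} = ∑_ℓ u_ℓ ⊗ v_ℓ ⊗ w_ℓ. -/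
/-! Karatsuba's trick: the slices `i` and `i + 1` of `T_{n,1}` together encode the product
`(a_i + a_{i+1} y)(b_0 + b_1 y)`, which costs only the three products `a_i b_0`, `a_{i+1} b_1` and
`(a_i + a_{i+1})(b_0 + b_1)` instead of four. Pairing up the `n + 1` slices, and spending two
products on the last one when `n + 1` is odd, gives `⌈3(n + 1)/2⌉` terms. -/

open Polynomial TensorProduct

section
variable (K : Type) [CommRing K]

def HasBoundedRepr (T : K[X] ⊗[K] (K[X] ⊗[K] K[X])) (p q s r : ℕ) : Prop :=
  ∃ u v w : Fin r → K[X],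
    (∀ l, u l ∈ degreeLE K p) ∧ (∀ l, v l ∈ degreeLE K q) ∧ (∀ l, w l ∈ degreeLE K s) ∧
    ∑ l, u l ⊗ₜ[K] (v l ⊗ₜ[K] w l) = T

noncomputable def mulTensorRow (i : ℕ) : K[X] ⊗[K] (K[X] ⊗[K] K[X]) :=
  ∑ j ∈ Finset.range 2, (X ^ i : K[X]) ⊗ₜ[K] ((X ^ j : K[X]) ⊗ₜ[K] (X ^ (i + j) : K[X]))

variable {K}

theorem X_pow_mem_degreeLE {a b : ℕ} (h : a ≤ b) : (X ^ a : K[X]) ∈ degreeLE K b :=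
  mem_degreeLE.2 <| (degree_X_pow_le a).trans <| by exact_mod_cast h

theorem HasBoundedRepr.mono {T : K[X] ⊗[K] (K[X] ⊗[K] K[X])} {p q s p' q' s' r : ℕ}
    (h : HasBoundedRepr K T p q s r) (hp : p ≤ p') (hq : q ≤ q') (hs : s ≤ s') :
    HasBoundedRepr K T p' q' s' r := by
  obtain ⟨u, v, w, hu, hv, hw, rfl⟩ := h
  exact ⟨u, v, w, fun l => degreeLE_mono (by exact_mod_cast hp) (hu l),
    fun l => degreeLE_mono (by exact_mod_cast hq) (hv l),
    fun l => degreeLE_mono (by exact_mod_cast hs) (hw l), rfl⟩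

theorem HasBoundedRepr.add {T T' : K[X] ⊗[K] (K[X] ⊗[K] K[X])} {p q s r r' : ℕ}
    (h : HasBoundedRepr K T p q s r) (h' : HasBoundedRepr K T' p q s r') :
    HasBoundedRepr K (T + T') p q s (r + r') := by
  obtain ⟨u, v, w, hu, hv, hw, rfl⟩ := h
  obtain ⟨u', v', w', hu', hv', hw', rfl⟩ := h'
  refine ⟨Fin.append u u', Fin.append v v', Fin.append w w', ?_, ?_, ?_, ?_⟩
  · exact Fin.addCases (by simpa using hu) (by simpa using hu')
  · exact Fin.addCases (by simpa using hv) (by simpa using hv')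
  · exact Fin.addCases (by simpa using hw) (by simpa using hw')
  · simp [Fin.sum_univ_add]

theorem hasBoundedRepr_mulTensorRow (i : ℕ) :
    HasBoundedRepr K (mulTensorRow K i) i 1 (i + 1) 2 := by
  refine ⟨![X ^ i, X ^ i], ![X ^ 0, X ^ 1], ![X ^ i, X ^ (i + 1)], ?_, ?_, ?_, ?_⟩
  iterate 3 (intro l; fin_cases l <;> exact X_pow_mem_degreeLE (by omega))
  simp [mulTensorRow, Finset.sum_range_succ]

theorem hasBoundedRepr_mulTensorRow_add_succ (i : ℕ) :
    HasBoundedRepr K (mulTensorRow K i + mulTensorRow K (i + 1)) (i + 1) 1 (i + 2) 3 := by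
  refine ⟨![X ^ i, X ^ (i + 1), X ^ i + X ^ (i + 1)], ![X ^ 0, X ^ 1, X ^ 0 + X ^ 1],
    ![X ^ i - X ^ (i + 1), X ^ (i + 2) - X ^ (i + 1), X ^ (i + 1)], ?_, ?_, ?_, ?_⟩
  iterate 3 (intro l; fin_cases l <;>
    first
    | exact X_pow_mem_degreeLE (by omega)
    | exact add_mem (X_pow_mem_degreeLE (by omega)) (X_pow_mem_degreeLE (by omega))
    | exact sub_mem (X_pow_mem_degreeLE (by omega)) (X_pow_mem_degreeLE (by omega)))
  simp only [mulTensorRow, Finset.sum_range_succ, Finset.sum_range_zero, Fin.sum_univ_three,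
    Matrix.cons_val_zero, Matrix.cons_val_one, Matrix.cons_val_two, Matrix.head_cons,
    Matrix.tail_cons, tmul_add, add_tmul, tmul_sub, zero_add, add_zero, add_assoc, Nat.reduceAdd]
  abel

theorem hasBoundedRepr_sum_mulTensorRow :
    ∀ n : ℕ, HasBoundedRepr K (∑ i ∈ Finset.range (n + 1), mulTensorRow K i) n 1 (n + 1)
      ((3 * (n + 1) + 1) / 2)
  | 0 => by simpa using hasBoundedRepr_mulTensorRow 0
  | 1 => by simpa [Finset.sum_range_succ] using hasBoundedRepr_mulTensorRow_add_succ (K := K) 0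
  | n + 2 => by
    rw [Finset.sum_range_succ, Finset.sum_range_succ, add_assoc,
      show (3 * (n + 2 + 1) + 1) / 2 = (3 * (n + 1) + 1) / 2 + 3 by omega]
    exact ((hasBoundedRepr_sum_mulTensorRow n).mono (by omega) le_rfl (by omega)).add
      (hasBoundedRepr_mulTensorRow_add_succ (n + 1))

end

theorem mulTensor_deg_one_rank_le_general (K : Type) [Field K] (n : ℕ) :
    ∃ u v w : Fin ((3 * (n + 1) + 1) / 2) → Polynomial K,
      (∀ l, (u l).degree ≤ (n : ℕ)) ∧
      (∀ l, (v l).degree ≤ (1 : ℕ)) ∧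
      (∀ l, (w l).degree ≤ ((n + 1 : ℕ))) ∧
      ∑ l, (u l) ⊗ₜ[K] ((v l) ⊗ₜ[K] (w l))
        = ∑ i ∈ Finset.range (n + 1), ∑ j ∈ Finset.range 2,
            ((X : Polynomial K) ^ i) ⊗ₜ[K]
              (((X : Polynomial K) ^ j) ⊗ₜ[K] ((X : Polynomial K) ^ (i + j))) := by
  obtain ⟨u, v, w, hu, hv, hw, hT⟩ := hasBoundedRepr_sum_mulTensorRow (K := K) n
  exact ⟨u, v, w, fun l => mem_degreeLE.1 (hu l), fun l => mem_degreeLE.1 (hv l),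
    fun l => mem_degreeLE.1 (hw l), hT⟩

/-- Let `K` be an arbitrary field and `n ≥ 1`.  Then the rank of the
polynomial multiplication tensor `T_{n,1}` over `K` is at most `⌈(3/2)(n+1)⌉`: there exist
`u_ℓ` of degree `≤ n`, `v_ℓ` of degree `≤ 1`, `w_ℓ` of degree `≤ n+1`,
`ℓ = 1, …, ⌈(3/2)(n+1)⌉`, with `T_{n,1} = ∑_ℓ u_ℓ ⊗ v_ℓ ⊗ w_ℓ`. -/
theorem mulTensor_deg_one_rank_le (K : Type) [Field K] (n : ℕ) (hn : 1 ≤ n) :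
    ∃ u v w : Fin ((3 * (n + 1) + 1) / 2) → Polynomial K,
      (∀ l, (u l).degree ≤ (n : ℕ)) ∧
      (∀ l, (v l).degree ≤ (1 : ℕ)) ∧
      (∀ l, (w l).degree ≤ ((n + 1 : ℕ))) ∧
      ∑ l, (u l) ⊗ₜ[K] ((v l) ⊗ₜ[K] (w l))
        = ∑ i ∈ Finset.range (n + 1), ∑ j ∈ Finset.range 2,
            ((X : Polynomial K) ^ i) ⊗ₜ[K]
              (((X : Polynomial K) ^ j) ⊗ₜ[K] ((X : Polynomial K) ^ (i + j))) :=
  mulTensor_deg_one_rank_le_general K n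
end

section
/- Let K be any field and n ≥ 0. In K[x] ⊗_K K[x] ⊗_K K[x] one has ∑_{i=0}^{n+2} ∑_{j=0}^{1} a_i ⊗ b_j ⊗ c_{i+j} = ∑_{i=0}^{n} ∑_{j=0}^{1} a_i ⊗ b_j ⊗ c_{i+j} + a_{n+1} ⊗ b_0 ⊗ (c_{n+1} − c_{n+2}) + (a_{n+1} + a_{n+2}) ⊗ (b_0 + b_1) ⊗ c_{n+2} + a_{n+2} ⊗ b_1 ⊗ (c_{n+3} − c_{n+2}). In particular, the standard representation of T_{n+2,1} differs from that of T_{n,1} by three additional rank-one tensors, so increasing n by 2 raises the rank of T_{n,1} by no more than 3. -/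
/-! The two new slices `i = n + 1, n + 2` of `T_{n+2,1}` form a 2 × 2 block
`a₁⊗b₀⊗c₁ + a₁⊗b₁⊗c₂ + a₂⊗b₀⊗c₂ + a₂⊗b₁⊗c₃`, and a Karatsuba-type identity writes such a
block with three rank-one tensors instead of four. -/

open Polynomial TensorProduct

theorem tmul_tmul_karatsuba {R M N P : Type*} [CommSemiring R]
    [AddCommGroup M] [Module R M] [AddCommGroup N] [Module R N] [AddCommGroup P] [Module R P]
    (a₁ a₂ : M) (b₀ b₁ : N) (c₁ c₂ c₃ : P) :
    a₁ ⊗ₜ[R] (b₀ ⊗ₜ[R] c₁) + a₁ ⊗ₜ[R] (b₁ ⊗ₜ[R] c₂)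
        + a₂ ⊗ₜ[R] (b₀ ⊗ₜ[R] c₂) + a₂ ⊗ₜ[R] (b₁ ⊗ₜ[R] c₃)
      = a₁ ⊗ₜ[R] (b₀ ⊗ₜ[R] (c₁ - c₂)) + (a₁ + a₂) ⊗ₜ[R] ((b₀ + b₁) ⊗ₜ[R] c₂)
        + a₂ ⊗ₜ[R] (b₁ ⊗ₜ[R] (c₃ - c₂)) := by
  simp only [tmul_sub, tmul_add, add_tmul]
  abel

theorem sum_range_two_X_pow_tmul {R : Type*} [CommSemiring R] (i : ℕ) :
    ∑ j ∈ Finset.range 2, ((X : R[X]) ^ i) ⊗ₜ[R] (((X : R[X]) ^ j) ⊗ₜ[R] ((X : R[X]) ^ (i + j)))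
      = ((X : R[X]) ^ i) ⊗ₜ[R] ((1 : R[X]) ⊗ₜ[R] ((X : R[X]) ^ i))
        + ((X : R[X]) ^ i) ⊗ₜ[R] ((X : R[X]) ⊗ₜ[R] ((X : R[X]) ^ (i + 1))) := by
  simp [Finset.sum_range_succ]

/-- Let `K` be any field and `n ≥ 0`.  In `K[x] ⊗ K[x] ⊗ K[x]` one has
`T_{n+2,1} = T_{n,1} + a_{n+1} ⊗ b_0 ⊗ (c_{n+1} − c_{n+2})
+ (a_{n+1} + a_{n+2}) ⊗ (b_0 + b_1) ⊗ c_{n+2} + a_{n+2} ⊗ b_1 ⊗ (c_{n+3} − c_{n+2})`.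
In particular, the standard representation of `T_{n+2,1}` differs from that of `T_{n,1}` by
three additional rank-one tensors, so increasing `n` by 2 raises the rank of `T_{n,1}` by no
more than 3. -/
theorem mulTensor_deg_one_step_two (K : Type) [Field K] (n : ℕ) :
    ∑ i ∈ Finset.range (n + 3), ∑ j ∈ Finset.range 2,
        ((X : Polynomial K) ^ i) ⊗ₜ[K]
          (((X : Polynomial K) ^ j) ⊗ₜ[K] ((X : Polynomial K) ^ (i + j)))
    = (∑ i ∈ Finset.range (n + 1), ∑ j ∈ Finset.range 2,
        ((X : Polynomial K) ^ i) ⊗ₜ[K]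
          (((X : Polynomial K) ^ j) ⊗ₜ[K] ((X : Polynomial K) ^ (i + j))))
      + ((X : Polynomial K) ^ (n + 1)) ⊗ₜ[K]
          ((1 : Polynomial K) ⊗ₜ[K] ((X : Polynomial K) ^ (n + 1) - (X : Polynomial K) ^ (n + 2)))
      + ((X : Polynomial K) ^ (n + 1) + (X : Polynomial K) ^ (n + 2)) ⊗ₜ[K]
          (((1 : Polynomial K) + X) ⊗ₜ[K] ((X : Polynomial K) ^ (n + 2)))
      + ((X : Polynomial K) ^ (n + 2)) ⊗ₜ[K]
          ((X : Polynomial K) ⊗ₜ[K] ((X : Polynomial K) ^ (n + 3) - (X : Polynomial K) ^ (n + 2))) := by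
  have block := tmul_tmul_karatsuba (R := K) (M := K[X]) (N := K[X]) (P := K[X])
    (X ^ (n + 1)) (X ^ (n + 2)) 1 X (X ^ (n + 1)) (X ^ (n + 2)) (X ^ (n + 3))
  rw [Finset.sum_range_succ, Finset.sum_range_succ, sum_range_two_X_pow_tmul,
    sum_range_two_X_pow_tmul]
  simp only [add_assoc] at block ⊢
  exact congrArg _ block
end

section
/- Let K = Z_2 be the field with two elements. There do not exist polynomials u_ℓ ∈ K[x] of degree ≤ 2, v_ℓ ∈ K[x] of degree ≤ 2, w_ℓ ∈ K[x] of degree ≤ 4, ℓ = 1, …, 5, such that ∑_{ℓ=1}^5 u_ℓ ⊗ v_ℓ ⊗ w_ℓ = T_{2,2}. In particular, the rank of the polynomial multiplication tensor for degrees 2 and 2 over Z_2 is strictly greater than 5. -/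
/-!
Taking the coefficient of `x^k` in the third factor turns `T_{2,2}` into five `3 × 3` Hankel
matrices `H_k = ([i + j = k])_{i,j}`, which are linearly independent. A decomposition
`∑_{ℓ=1}^5 u_ℓ ⊗ v_ℓ ⊗ w_ℓ` writes each `H_k` as a combination of the five rank-one matrices
`u_ℓ v_ℓᵀ`, so these span the same five-dimensional space and are Hankel themselves. Over `𝔽₂`
every rank-one `3 × 3` Hankel matrix has equal entries at `(0,1)` and `(1,1)`; hence so would
`H_1`, which it does not.
-/

open Polynomial TensorProduct Matrix Submodule

theorem span_range_eq_of_linearIndependent {K V ι ι' : Type*} [DivisionRing K] [AddCommGroup V]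
    [Module K V] [Fintype ι] [Fintype ι'] {M : ι' → V} {H : ι → V}
    (hH : LinearIndependent K H) (hcard : Fintype.card ι' ≤ Fintype.card ι)
    (hHM : ∀ k, H k ∈ span K (Set.range M)) :
    span K (Set.range M) = span K (Set.range H) := by
  have := FiniteDimensional.span_of_finite K (Set.finite_range M)
  refine (eq_of_le_of_finrank_le (span_le.2 (Set.range_subset_iff.2 hHM)) ?_).symm
  rw [finrank_span_eq_card hH]
  exact (finrank_range_le_card M).trans hcard

def hankelBasis (R : Type*) [Zero R] [One R] (n m k : ℕ) : Matrix (Fin n) (Fin m) R :=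
  of fun i j => if (i : ℕ) + j = k then 1 else 0

def hankelMatrices (R : Type*) [Semiring R] (n m : ℕ) :
    Submodule R (Matrix (Fin n) (Fin m) R) where
  carrier := {A | ∀ i j i' j' : Fin _, (i : ℕ) + j = i' + j' → A i j = A i' j'}
  add_mem' hA hB i j i' j' h := by simp [hA i j i' j' h, hB i j i' j' h]
  zero_mem' := by simp
  smul_mem' c A hA i j i' j' h := by simp [hA i j i' j' h]

theorem hankelBasis_mem_hankelMatrices (R : Type*) [Semiring R] (n m k : ℕ) :
    hankelBasis R n m k ∈ hankelMatrices R n m := by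
  intro i j i' j' h
  simp [hankelBasis, h]

theorem linearIndependent_hankelBasis (R : Type*) [Ring R] (n m : ℕ) :
    LinearIndependent R fun k : Fin (n + m + 1) => hankelBasis R (n + 1) (m + 1) k := by
  refine Fintype.linearIndependent_iff.2 fun g hg k => ?_
  have hentry := congrFun (congrFun hg ⟨min (k : ℕ) n, by omega⟩) ⟨k - min (k : ℕ) n, by omega⟩
  simpa [hankelBasis, Matrix.sum_apply, Nat.add_sub_cancel' (min_le_left _ _), Fin.val_eq_val]
    using hentry

noncomputable def mulTensor (R : Type*) [CommSemiring R] (n m : ℕ) :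
    R[X] ⊗[R] (R[X] ⊗[R] R[X]) :=
  ∑ i ∈ Finset.range (n + 1), ∑ j ∈ Finset.range (m + 1),
    (X ^ i : R[X]) ⊗ₜ[R] ((X ^ j : R[X]) ⊗ₜ[R] (X ^ (i + j) : R[X]))

noncomputable def coeffTriple (R : Type*) [CommSemiring R] (i j k : ℕ) :
    R[X] ⊗[R] (R[X] ⊗[R] R[X]) →ₗ[R] R :=
  (TensorProduct.lid R R).toLinearMap ∘ₗ TensorProduct.map (lcoeff R i)
    ((TensorProduct.lid R R).toLinearMap ∘ₗ TensorProduct.map (lcoeff R j) (lcoeff R k))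

@[simp]
theorem coeffTriple_tmul {R : Type*} [CommSemiring R] (i j k : ℕ) (p q r : R[X]) :
    coeffTriple R i j k (p ⊗ₜ (q ⊗ₜ r)) = p.coeff i * (q.coeff j * r.coeff k) := by
  simp [coeffTriple]

theorem coeffTriple_mulTensor {R : Type*} [CommSemiring R] {n m i j : ℕ} (hi : i ≤ n)
    (hj : j ≤ m) (k : ℕ) :
    coeffTriple R i j k (mulTensor R n m) = if i + j = k then 1 else 0 := by
  simp only [mulTensor, map_sum, coeffTriple_tmul]
  rw [Finset.sum_eq_single_of_mem i (by simpa [Nat.lt_succ_iff])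
      fun a _ hai => by simp [coeff_X_pow, Ne.symm hai],
    Finset.sum_eq_single_of_mem j (by simpa [Nat.lt_succ_iff])
      fun b _ hbj => by simp [coeff_X_pow, Ne.symm hbj]]
  simp [coeff_X_pow, eq_comm]

theorem hankelBasis_eq_sum_of_sum_tmul_eq_mulTensor {R ι : Type*} [CommSemiring R] [Fintype ι]
    {n m : ℕ} {u v w : ι → R[X]} (h : ∑ l, u l ⊗ₜ[R] (v l ⊗ₜ[R] w l) = mulTensor R n m)
    (k : ℕ) :
    hankelBasis R (n + 1) (m + 1) k =
      ∑ l, (w l).coeff k • vecMulVec (fun i : Fin (n + 1) => (u l).coeff i)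
        (fun j : Fin (m + 1) => (v l).coeff j) := by
  ext i j
  have hcoeff := congrArg (coeffTriple R i j k) h
  rw [coeffTriple_mulTensor (Nat.lt_succ_iff.1 i.2) (Nat.lt_succ_iff.1 j.2), map_sum] at hcoeff
  simp only [coeffTriple_tmul] at hcoeff
  simp only [hankelBasis, of_apply, Matrix.sum_apply, Matrix.smul_apply, vecMulVec_apply,
    smul_eq_mul, ← hcoeff]
  exact Finset.sum_congr rfl fun l _ => by ring

/-- Over `𝔽₂` the nonzero rank-one `3 × 3` Hankel matrices are `ttᵀ` for the moment vectors
`t = (1, 0, 0), (1, 1, 1), (0, 0, 1)` of the points `0, 1, ∞`. -/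
theorem vecMulVec_zero_one_eq_one_one_of_mem_hankelMatrices {a b : Fin 3 → ZMod 2}
    (h : vecMulVec a b ∈ hankelMatrices (ZMod 2) 3 3) : a 0 * b 1 = a 1 * b 1 := by
  have h01 : a 0 * b 1 = a 1 * b 0 := h 0 1 1 0 rfl
  have h02 : a 0 * b 2 = a 1 * b 1 := h 0 2 1 1 rfl
  have h20 : a 1 * b 1 = a 2 * b 0 := h 1 1 2 0 rfl
  have h12 : a 1 * b 2 = a 2 * b 1 := h 1 2 2 1 rfl
  clear h
  revert a b
  decide

/-- Let `K = ℤ/2` be the field with two elements.  There do not exist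
polynomials `u_ℓ` of degree `≤ 2`, `v_ℓ` of degree `≤ 2`, `w_ℓ` of degree `≤ 4`,
`ℓ = 1, …, 5`, such that `∑_{ℓ=1}^5 u_ℓ ⊗ v_ℓ ⊗ w_ℓ = T_{2,2}`.  In particular, the rank of
the polynomial multiplication tensor for degrees 2 and 2 over `ℤ/2` is strictly greater
than 5. -/
theorem mulTensor_two_two_no_rank_five :
    ¬ ∃ u v w : Fin 5 → Polynomial (ZMod 2),
      (∀ l, (u l).degree ≤ (2 : ℕ)) ∧
      (∀ l, (v l).degree ≤ (2 : ℕ)) ∧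
      (∀ l, (w l).degree ≤ (4 : ℕ)) ∧
      ∑ l, (u l) ⊗ₜ[ZMod 2] ((v l) ⊗ₜ[ZMod 2] (w l))
        = ∑ i ∈ Finset.range 3, ∑ j ∈ Finset.range 3,
            ((X : Polynomial (ZMod 2)) ^ i) ⊗ₜ[ZMod 2]
              (((X : Polynomial (ZMod 2)) ^ j) ⊗ₜ[ZMod 2]
                ((X : Polynomial (ZMod 2)) ^ (i + j))) := by
  rintro ⟨u, v, w, -, -, -, h⟩
  set M : Fin 5 → Matrix (Fin 3) (Fin 3) (ZMod 2) := fun l =>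
    vecMulVec (fun i : Fin 3 => (u l).coeff i) (fun j : Fin 3 => (v l).coeff j)
  have hslice (k : Fin 5) : hankelBasis (ZMod 2) 3 3 k = ∑ l, (w l).coeff k • M l :=
    hankelBasis_eq_sum_of_sum_tmul_eq_mulTensor (n := 2) (m := 2) h k
  have hspan : span (ZMod 2) (Set.range M) =
      span (ZMod 2) (Set.range fun k : Fin 5 => hankelBasis (ZMod 2) 3 3 k) := by
    refine span_range_eq_of_linearIndependent (linearIndependent_hankelBasis (ZMod 2) 2 2)
      le_rfl fun k => ?_
    rw [hslice k]
    exact sum_mem fun l _ => smul_mem _ _ (subset_span ⟨l, rfl⟩)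
  have hM (l : Fin 5) : M l 0 1 = M l 1 1 :=
    vecMulVec_zero_one_eq_one_one_of_mem_hankelMatrices <|
      span_le.2 (Set.range_subset_iff.2 fun k => hankelBasis_mem_hankelMatrices _ _ _ _)
        (hspan.le (subset_span ⟨l, rfl⟩))
  have h01 := congrFun (congrFun (hslice 1) 0) 1
  have h11 := congrFun (congrFun (hslice 1) 1) 1
  simp only [Matrix.sum_apply, Matrix.smul_apply, hM] at h01 h11
  simpa [hankelBasis] using h01.trans h11.symm
end
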